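/- arXiv:2508.10410 — 2 statements merged into one kernel-verified Lean document; each statement's English description precedes it below -/
import Mathlib

section
/- The generating function identity (1 − (x+2)²·y + (x+1)³·y²) · ∑_{n≥1} a(n)·yⁿ = x·y·(x+1)·(1 − x·y) holds in the ring of formal power series in y over ℤ[x]. -/
open Polynomial

/-- The pair `(a n, b n)` of bracket polynomials of the Celtic knot shadow. -/
noncomputable def ab : ℕ → Polynomial ℤ × Polynomial ℤ
  | 0 => (0, 0)
  | 1 => (X ^ 2 + X, X)
  | n + 2 =>
      ((X ^ 2 + 3 * X + 3) * (ab (n + 1)).1 + (X + 1) * (ab (n + 1)).2,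
       (X + 2) * (ab (n + 1)).1 + (X + 1) * (ab (n + 1)).2)

/-- `a n = ⟨CK₄^{2n}⟩`, the Kauffman bracket of the Celtic knot shadow. -/
noncomputable def a (n : ℕ) : Polynomial ℤ := (ab n).1

/-- `b n = ⟨V₂^{2n-1} CK₄^{2n}⟩`. -/
noncomputable def b (n : ℕ) : Polynomial ℤ := (ab n).2

/-!
Eliminating `b` from the coupled recurrence gives `a (n+3) = (x+2)² a (n+2) - (x+1)³ a (n+1)`,
whose characteristic polynomial is `1 - (x+2)² y + (x+1)³ y²`. Multiplying the generating series
by it therefore leaves a polynomial of degree at most `2` in `y`, read off from `a 1` and `a 2`.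
-/

namespace PowerSeries

variable {R : Type*} [CommRing R]

theorem mul_mk_eq_of_recurrence (p q : R) (f : ℕ → R)
    (hf : ∀ n, f (n + 3) = p * f (n + 2) - q * f (n + 1)) :
    (1 - C p * X + C q * X ^ 2) * mk f
      = C (f 0) + C (f 1 - p * f 0) * X + C (f 2 - p * f 1 + q * f 0) * X ^ 2 := by
  ext n
  rcases n with _ | _ | _ | n
  case succ.succ.succ =>
    simp only [add_mul, sub_mul, one_mul, mul_assoc, map_add, map_sub, coeff_mk, coeff_C_mul,
      coeff_succ_X_mul, coeff_X_pow_mul', coeff_X_pow, coeff_succ_C, coeff_succ_mul_X,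
      le_add_iff_nonneg_left, zero_le, reduceIte, Nat.reduceSubDiff, Nat.reduceEqDiff, mul_zero,
      sub_self, add_zero]
    linear_combination hf n
  all_goals simp [sub_mul, add_mul, mul_assoc, coeff_X_pow_mul', coeff_X_pow, coeff_succ_X_mul]

end PowerSeries

theorem a_add_two (n : ℕ) : a (n + 2) = (X ^ 2 + 3 * X + 3) * a (n + 1) + (X + 1) * b (n + 1) :=
  rfl

theorem b_add_two (n : ℕ) : b (n + 2) = (X + 2) * a (n + 1) + (X + 1) * b (n + 1) :=
  rfl

theorem a_add_three (n : ℕ) : a (n + 3) = (X + 2) ^ 2 * a (n + 2) - (X + 1) ^ 3 * a (n + 1) := by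
  rw [a_add_two (n + 1), b_add_two]
  linear_combination -(X + 1) * a_add_two n

theorem celtic_generating_function :
    ((1 : PowerSeries (Polynomial ℤ)) - PowerSeries.C ((X + 2) ^ 2) * PowerSeries.X
          + PowerSeries.C ((X + 1) ^ 3) * PowerSeries.X ^ 2)
        * PowerSeries.mk (fun n => if n = 0 then 0 else a n)
      = PowerSeries.C (X * (X + 1)) * PowerSeries.X
          - PowerSeries.C (X * (X + 1) * X) * PowerSeries.X ^ 2 := by
  have ha₁ : a 1 = X * (X + 1) := by rw [a, ab]; ring
  have ha₂ : a 2 - (X + 2) ^ 2 * a 1 = -(X * (X + 1) * X) := by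
    rw [a_add_two, ha₁, show b 1 = X from rfl]; ring
  rw [PowerSeries.mul_mk_eq_of_recurrence _ _ _ fun n => by simpa using a_add_three n]
  simp only [reduceIte, one_ne_zero, OfNat.ofNat_ne_zero, map_zero, mul_zero, sub_zero, zero_add,
    add_zero]
  rw [ha₂, ha₁, map_neg, neg_mul, ← sub_eq_add_neg]
end

section
/- For all n ≥ 1, every coefficient of the polynomial a(n) ∈ ℤ[x] is a nonnegative integer, and the coefficient of x^k in a(n) is positive exactly for 1 ≤ k ≤ 2n. -/
open Polynomial

lemma coeff_X_mul' (p : Polynomial ℤ) (k : ℕ) :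
    (X * p).coeff k = if k = 0 then 0 else p.coeff (k - 1) := by
  cases k with
  | zero => simp [mul_coeff_zero]
  | succ n => simp [coeff_X_mul]

lemma a_succ (m : ℕ) : a (m + 2) =
    X * (X * a (m + 1)) + 3 * (X * a (m + 1)) + 3 * a (m + 1)
      + X * b (m + 1) + b (m + 1) := by
  show (ab (m+2)).1 = _
  rw [ab]
  show (X ^ 2 + 3 * X + 3) * a (m+1) + (X + 1) * b (m+1) = _
  ring

lemma b_succ (m : ℕ) : b (m + 2) =
    X * a (m + 1) + 2 * a (m + 1) + X * b (m + 1) + b (m + 1) := by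
  show (ab (m+2)).2 = _
  rw [ab]
  show (X + 2) * a (m+1) + (X + 1) * b (m+1) = _
  ring

lemma a_succ_coeff (m k : ℕ) : (a (m + 2)).coeff k =
    (if k = 0 ∨ k = 1 then 0 else (a (m+1)).coeff (k - 2))
    + 3 * (if k = 0 then 0 else (a (m+1)).coeff (k - 1))
    + 3 * (a (m+1)).coeff k
    + (if k = 0 then 0 else (b (m+1)).coeff (k - 1))
    + (b (m+1)).coeff k := by
  rw [a_succ]
  simp only [coeff_add, coeff_X_mul', coeff_ofNat_mul, Nat.sub_sub, one_add_one_eq_two]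
  split_ifs <;> omega

lemma b_succ_coeff (m k : ℕ) : (b (m + 2)).coeff k =
    (if k = 0 then 0 else (a (m+1)).coeff (k - 1))
    + 2 * (a (m+1)).coeff k
    + (if k = 0 then 0 else (b (m+1)).coeff (k - 1))
    + (b (m+1)).coeff k := by
  rw [b_succ]
  simp only [coeff_add, coeff_X_mul', coeff_ofNat_mul]

lemma key : ∀ m : ℕ,
    (∀ k, 0 ≤ (a (m+1)).coeff k) ∧ (∀ k, 0 < (a (m+1)).coeff k ↔ 1 ≤ k ∧ k ≤ 2 * (m+1))
    ∧ (∀ k, 0 ≤ (b (m+1)).coeff k) ∧ (∀ k, 0 < (b (m+1)).coeff k ↔ 1 ≤ k ∧ k ≤ 2 * (m+1) - 1) := by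
  intro m
  induction m with
  | zero =>
    have ha : a 1 = X ^ 2 + X := rfl
    have hb : b 1 = X := rfl
    refine ⟨fun k => ?_, fun k => ?_, fun k => ?_, fun k => ?_⟩ <;>
      simp [ha, hb, coeff_X, coeff_X_pow] <;> split_ifs <;> omega
  | succ m ih =>
    obtain ⟨ha0, ha1, hb0, hb1⟩ := ih
    have step : ∀ k, (0 ≤ (a (m+2)).coeff k ∧ (0 < (a (m+2)).coeff k ↔ 1 ≤ k ∧ k ≤ 2 * (m+2)))
        ∧ (0 ≤ (b (m+2)).coeff k ∧ (0 < (b (m+2)).coeff k ↔ 1 ≤ k ∧ k ≤ 2 * (m+2) - 1)) := by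
      intro k
      rw [a_succ_coeff, b_succ_coeff]
      have h1 := ha0 k
      have h2 := ha1 k
      have h3 := hb0 k
      have h4 := hb1 k
      have h5 := ha0 (k-1)
      have h6 := ha1 (k-1)
      have h7 := hb0 (k-1)
      have h8 := hb1 (k-1)
      have h9 := ha0 (k-2)
      have h10 := ha1 (k-2)
      split_ifs <;> omega
    exact ⟨fun k => (step k).1.1, fun k => (step k).1.2, fun k => (step k).2.1,
      fun k => (step k).2.2⟩

theorem celtic_coeff_positivity :
    ∀ n : ℕ, 1 ≤ n →
      (∀ k : ℕ, 0 ≤ (a n).coeff k) ∧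
        (∀ k : ℕ, 0 < (a n).coeff k ↔ 1 ≤ k ∧ k ≤ 2 * n) := by
  intro n hn
  obtain ⟨m, rfl⟩ := Nat.exists_eq_add_of_le hn
  rw [Nat.add_comm] at *
  exact ⟨(key m).1, (key m).2.1⟩
end
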